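/- Let V be a surjective and orthogonal preserving m-ordered PSO on S. Then there exists a permutation π of ℕ such that P_{i_1...i_m,k} = 0 whenever π(k) ∉ {i_1,...,i_m}, and V(e_{π(k)}) = e_k for all k. -/

import Mathlib

/-- The m-ordered polynomial operator associated to a hypermatrix `P`. -/
noncomputable def psoV (m : ℕ) (P : (Fin m → ℕ) → ℕ → ℝ) (x : ℕ → ℝ) (k : ℕ) : ℝ :=
  ∑' i : Fin m → ℕ, P i k * ∏ j, x (i j)

/-- The hypermatrix is stochastic. -/
def IsStochastic (m : ℕ) (P : (Fin m → ℕ) → ℕ → ℝ) : Prop :=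
  (∀ i k, 0 ≤ P i k) ∧ ∀ i, HasSum (fun k => P i k) 1

/-- symmetry of the hypermatrix in its first m indices. -/
def HypSymm (m : ℕ) (P : (Fin m → ℕ) → ℕ → ℝ) : Prop :=
  ∀ (σ : Equiv.Perm (Fin m)) (i : Fin m → ℕ) (k : ℕ), P (i ∘ σ) k = P i k

/-- membership in the infinite-dimensional simplex S. -/
def inS (x : ℕ → ℝ) : Prop := (∀ i, 0 ≤ x i) ∧ HasSum x 1

/-- the standard basis vector e_i. -/
def stdBasis (i : ℕ) : ℕ → ℝ := fun n => if n = i then 1 else 0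

/-- x and y are orthogonal: disjoint supports. -/
def Orth (x y : ℕ → ℝ) : Prop := ∀ k, x k * y k = 0

/-- V is orthogonal preserving on S. -/
def IsOP (m : ℕ) (P : (Fin m → ℕ) → ℕ → ℝ) : Prop :=
  ∀ x y : ℕ → ℝ, inS x → inS y → Orth x y → Orth (psoV m P x) (psoV m P y)

/-- V is surjective on S. -/
def SurjOnS (m : ℕ) (P : (Fin m → ℕ) → ℕ → ℝ) : Prop :=
  ∀ y : ℕ → ℝ, inS y → ∃ x : ℕ → ℝ, inS x ∧ psoV m P x = y

/-!
Surjectivity onto each vertex `e_k` produces some `x` with `V x = e_k`; any `a` with `x a > 0` then has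
`P_{a…a,j} = 0` for `j ≠ k`, so `V e_a = e_k`. The resulting map `k ↦ a` is injective because
`V` is a function, and surjective because `V e_b` would otherwise be orthogonal to every vertex.
Finally, if `π k` is not among `i₁,…,i_m`, a uniform distribution `x` on a finite set containing the
`i_j` but not `π k` is orthogonal to `e_{π k}`, so `V x` is orthogonal to `e_k`, which forces
`P_{i₁…i_m,k} = 0`.
-/

open Finset Function

theorem hasSum_fin_pi_prod {ι : Type*} {f : ι → ℝ} {s : ℝ} (hf : 0 ≤ f) (h : HasSum f s)
    (n : ℕ) : HasSum (fun i : Fin n → ι => ∏ j, f (i j)) (s ^ n) := by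
  induction n with
  | zero => simp
  | succ n ih =>
    set g := fun i : Fin n → ι => ∏ j, f (i j)
    have hg : 0 ≤ g := fun _ => prod_nonneg fun _ _ => hf _
    have hprod : HasSum (fun p : ι × (Fin n → ι) => f p.1 * g p.2) (s * s ^ n) :=
      h.mul ih (h.summable.mul_of_nonneg ih.summable hf hg)
    rw [pow_succ', ← (Fin.consEquiv fun _ => ι).hasSum_iff]
    convert hprod using 2 with p
    simp [g, Fin.consEquiv, Fin.prod_univ_succ]

theorem stdBasis_injective : Injective stdBasis := fun a b h => by
  simpa [stdBasis] using congrFun h a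

theorem inS_stdBasis (a : ℕ) : inS (stdBasis a) :=
  ⟨fun n => by unfold stdBasis; split_ifs <;> norm_num, hasSum_ite_eq a 1⟩

theorem orth_stdBasis_of_apply_eq_zero {x : ℕ → ℝ} {p : ℕ} (hp : x p = 0) :
    Orth x (stdBasis p) := fun n => by
  by_cases hn : n = p
  · simp [hn, hp]
  · simp [stdBasis, hn]

theorem inS.exists_pos {x : ℕ → ℝ} (hx : inS x) : ∃ a, 0 < x a := by
  by_contra! h
  have hx0 : x = 0 := funext fun a => le_antisymm (h a) (hx.1 a)
  exact one_ne_zero (hx.2.unique (hx0 ▸ hasSum_zero))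

theorem exists_inS_apply_eq_zero_forall_mem_pos (s : Finset ℕ) {p : ℕ} (hp : p ∉ s) :
    ∃ x, inS x ∧ x p = 0 ∧ ∀ n ∈ s, 0 < x n := by
  -- `p + 1` is added so that the support is nonempty even when `s` is empty.
  set T := insert (p + 1) s
  have hpT : p ∉ T := by simp [T, hp]
  have hcard : (0 : ℝ) < #T := by exact_mod_cast (insert_nonempty _ _).card_pos
  refine ⟨fun n => if n ∈ T then (#T : ℝ)⁻¹ else 0, ⟨fun n => ?_, ?_⟩, if_neg hpT,
    fun n hn => by simp [T, hn, hcard]⟩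
  · dsimp only
    split_ifs <;> positivity
  · convert hasSum_sum_of_ne_finset_zero (s := T) (L := .unconditional ℕ) fun n hn => if_neg hn
    rw [sum_ite_mem, inter_self, sum_const, nsmul_eq_mul, mul_inv_cancel₀ hcard.ne']

section Stochastic

variable {m : ℕ} {P : (Fin m → ℕ) → ℕ → ℝ}

theorem psoV_stdBasis (a k : ℕ) : psoV m P (stdBasis a) k = P (fun _ => a) k := by
  rw [psoV, tsum_eq_single (fun _ => a)]
  · simp [stdBasis]
  · intro i hi
    obtain ⟨j, hj⟩ : ∃ j, i j ≠ a := by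
      by_contra! h
      exact hi (funext h)
    rw [prod_eq_zero (mem_univ j) (if_neg hj), mul_zero]

theorem IsStochastic.summable_psoV_term (hP : IsStochastic m P) {x : ℕ → ℝ} (hx : inS x)
    (k : ℕ) : Summable fun i : Fin m → ℕ => P i k * ∏ j, x (i j) :=
  .of_nonneg_of_le (fun i => mul_nonneg (hP.1 i k) (prod_nonneg fun _ _ => hx.1 _))
    (fun i => mul_le_of_le_one_left (prod_nonneg fun _ _ => hx.1 _)
      (le_hasSum (hP.2 i) k fun j _ => hP.1 i j))
    (hasSum_fin_pi_prod hx.1 hx.2 m).summable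

theorem IsStochastic.eq_zero_of_psoV_eq_zero (hP : IsStochastic m P) {x : ℕ → ℝ} (hx : inS x)
    {k : ℕ} (h0 : psoV m P x k = 0) {i : Fin m → ℕ} (hi : ∀ j, 0 < x (i j)) : P i k = 0 := by
  have hsum : HasSum (fun i : Fin m → ℕ => P i k * ∏ j, x (i j)) 0 :=
    h0 ▸ (hP.summable_psoV_term hx k).hasSum
  have hterm : P i k * ∏ j, x (i j) = 0 := congrFun ((hasSum_zero_iff_of_nonneg fun i =>
    mul_nonneg (hP.1 i k) (prod_nonneg fun _ _ => hx.1 _)).1 hsum) i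
  exact (mul_eq_zero.1 hterm).resolve_right (prod_pos fun j _ => hi j).ne'

theorem IsStochastic.psoV_stdBasis_eq (hP : IsStochastic m P) {a k : ℕ}
    (h : ∀ j ≠ k, P (fun _ => a) j = 0) : psoV m P (stdBasis a) = stdBasis k := by
  have hk : P (fun _ => a) k = 1 := (hasSum_single k h).unique (hP.2 _)
  funext j
  rw [psoV_stdBasis]
  by_cases hj : j = k
  · simp [stdBasis, hj, hk]
  · simp [stdBasis, hj, h j hj]

theorem IsStochastic.exists_psoV_stdBasis_ne_zero (hP : IsStochastic m P) (b : ℕ) :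
    ∃ k, psoV m P (stdBasis b) k ≠ 0 := by
  by_contra! h
  simp_rw [psoV_stdBasis] at h
  exact one_ne_zero ((hP.2 (fun _ => b)).unique (by simp [h]))

theorem IsStochastic.exists_psoV_stdBasis_eq (hP : IsStochastic m P) (hsur : SurjOnS m P)
    (k : ℕ) : ∃ a, psoV m P (stdBasis a) = stdBasis k := by
  obtain ⟨x, hx, hVx⟩ := hsur _ (inS_stdBasis k)
  obtain ⟨a, ha⟩ := hx.exists_pos
  exact ⟨a, hP.psoV_stdBasis_eq fun j hj =>
    hP.eq_zero_of_psoV_eq_zero hx (by simp [hVx, stdBasis, hj]) fun _ => ha⟩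

theorem IsOP.psoV_apply_eq_zero (hop : IsOP m P) {x : ℕ → ℝ} (hx : inS x) {p k : ℕ}
    (hp : x p = 0) (hVp : psoV m P (stdBasis p) = stdBasis k) : psoV m P x k = 0 := by
  simpa [hVp, stdBasis] using hop _ _ hx (inS_stdBasis p) (orth_stdBasis_of_apply_eq_zero hp) k

end Stochastic

theorem stmt14_general (m : ℕ) (P : (Fin m → ℕ) → ℕ → ℝ)
    (hP : IsStochastic m P)
    (hsur : SurjOnS m P) (hop : IsOP m P) :
    ∃ π : Equiv.Perm ℕ,
      (∀ (i : Fin m → ℕ) (k : ℕ), (∀ j, i j ≠ π k) → P i k = 0) ∧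
      ∀ k : ℕ, psoV m P (stdBasis (π k)) = stdBasis k := by
  choose π hπ using hP.exists_psoV_stdBasis_eq hsur
  have hinj : Injective π := fun k k' h => stdBasis_injective (by rw [← hπ k, ← hπ k', h])
  have hsurj : Surjective π := by
    intro b
    by_contra! hb
    obtain ⟨k, hk⟩ := hP.exists_psoV_stdBasis_ne_zero b
    exact hk (hop.psoV_apply_eq_zero (inS_stdBasis b) (by simp [stdBasis, hb k]) (hπ k))
  refine ⟨Equiv.ofBijective π ⟨hinj, hsurj⟩, fun i k (hi : ∀ j, i j ≠ π k) => ?_, hπ⟩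
  obtain ⟨x, hx, hxk, hpos⟩ :=
    exists_inS_apply_eq_zero_forall_mem_pos (image i univ) (p := π k) (by simpa using hi)
  exact hP.eq_zero_of_psoV_eq_zero hx (hop.psoV_apply_eq_zero hx hxk (hπ k))
    fun j => hpos _ (mem_image_of_mem i (mem_univ j))

theorem stmt14 (m : ℕ) (hm : 1 ≤ m) (P : (Fin m → ℕ) → ℕ → ℝ)
    (hP : IsStochastic m P) (hsym : HypSymm m P)
    (hsur : SurjOnS m P) (hop : IsOP m P) :
    ∃ π : Equiv.Perm ℕ,
      (∀ (i : Fin m → ℕ) (k : ℕ), (∀ j, i j ≠ π k) → P i k = 0) ∧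
      ∀ k : ℕ, psoV m P (stdBasis (π k)) = stdBasis k :=
  stmt14_general m P hP hsur hop
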